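/- Let 2 ≤ k ≤ n, λ > 0, p_1 > p_2 ≥ p_3 ≥ … ≥ p_k > 0, and let z_1,…,z_k ∈ ℂ^n be unit vectors that are δ-orthogonal for some δ ∈ [0,1]. Let M = ∑_{l=1}^k n p_l λ z_l z_l^* and let λ̃_1 be its largest eigenvalue. Then n p_1 λ ≤ λ̃_1 ≤ n p_1 λ + n p_2 λ (k−1)δ, and any unit eigenvector ṽ_1 of M with eigenvalue λ̃_1 satisfies |⟨z_1, ṽ_1⟩|² ≥ 1 − p_2(k−1)δ/(p_1 − p_2). -/

import Mathlib

/-!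
With `a_l = n p_l λ`, the quadratic form of `M = ∑ a_l z_l z_l^*` at a unit vector `v` is
`∑ a_l |⟨z_l, v⟩|²`. For `δ`-orthogonal unit vectors, Cauchy–Schwarz bounds the Gram form:
`‖∑ c_l z_l‖² ≤ (1 + (k-1)δ) ∑ |c_l|²`; testing `w = ∑ ⟨z_l, v⟩ z_l` against `v` turns this into the
Bessel-type bound `∑ |⟨z_l, v⟩|² ≤ 1 + (k-1)δ`. The top eigenvalue dominates the quadratic form
at `z_1`, so `λ̃_1 ≥ a_1`. At a unit top eigenvector the form equals `λ̃_1`, and since `a_l ≤ a_2`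
for `l ≥ 2` it is at most `a_1 q + a_2 (1 + (k-1)δ - q)` with `q = |⟨z_1, ṽ_1⟩|² ≤ 1`. This gives
the upper bound on `λ̃_1` and, against `λ̃_1 ≥ a_1`, the bound `(p_1 - p_2)(1 - q) ≤ p_2 (k-1)δ`.
-/

open MeasureTheory ProbabilityTheory Complex Matrix
open scoped BigOperators ENNReal

noncomputable section

/-- The standard Hermitian inner product on `ℂ^n`. -/
def hInner {n : ℕ} (x y : Fin n → ℂ) : ℂ := ∑ i, (starRingEnd ℂ) (x i) * y i

/-- The `ℓ₂` norm on `ℂ^n`. -/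
def hNorm {n : ℕ} (x : Fin n → ℂ) : ℝ := Real.sqrt (∑ i, ‖x i‖ ^ 2)

/-- A family of vectors in `ℂ^n` is `δ`-orthogonal if all distinct pairs have inner
product bounded by `δ` times the product of the norms. -/
def DeltaOrth {n : ℕ} {ι : Type*} (z : ι → (Fin n → ℂ)) (δ : ℝ) : Prop :=
  ∀ i j, i ≠ j → ‖hInner (z i) (z j)‖ ≤ δ * hNorm (z i) * hNorm (z j)

open scoped InnerProductSpace ComplexConjugate

section AlmostOrthogonal

variable {𝕜 E ι : Type*} [RCLike 𝕜] [NormedAddCommGroup E] [InnerProductSpace 𝕜 E] [Fintype ι]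
  {z : ι → E} {δ : ℝ}

theorem norm_sum_smul_sq_le_of_norm_inner_le (hz : ∀ i, ‖z i‖ = 1) (hδ : 0 ≤ δ)
    (horth : ∀ i j, i ≠ j → ‖⟪z i, z j⟫_𝕜‖ ≤ δ) (c : ι → 𝕜) :
    ‖∑ i, c i • z i‖ ^ 2 ≤ (1 + (Fintype.card ι - 1) * δ) * ∑ i, ‖c i‖ ^ 2 := by
  classical
  -- the diagonal entry `1` is split as `δ + (1 - δ)` so that the bound sums in closed form
  have hgram : ∀ i j, ‖⟪z i, z j⟫_𝕜‖ ≤ δ + if i = j then 1 - δ else 0 := by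
    intro i j
    split_ifs with h
    · simp [h, hz]
    · simpa using horth i j h
  have hcs : (∑ i, ‖c i‖) ^ 2 ≤ Fintype.card ι * ∑ i, ‖c i‖ ^ 2 :=
    sq_sum_le_card_mul_sum_sq
  calc ‖∑ i, c i • z i‖ ^ 2
      = ‖∑ i, ∑ j, conj (c i) * c j * ⟪z i, z j⟫_𝕜‖ := by
        rw [← inner_self_eq_norm_sq (𝕜 := 𝕜), inner_self_re_eq_norm]
        simp only [sum_inner, inner_sum, inner_smul_left, inner_smul_right, Finset.mul_sum]
        rw [Finset.sum_comm]
        exact congrArg _ (Finset.sum_congr rfl fun i _ => Finset.sum_congr rfl fun j _ => by ring)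
    _ ≤ ∑ i, ∑ j, ‖c i‖ * ‖c j‖ * (δ + if i = j then 1 - δ else 0) := by
        refine (norm_sum_le _ _).trans (Finset.sum_le_sum fun i _ => ?_)
        refine (norm_sum_le _ _).trans (Finset.sum_le_sum fun j _ => ?_)
        rw [norm_mul, norm_mul, RCLike.norm_conj]
        gcongr
        exact hgram i j
    _ = ∑ i, ∑ j, (δ * (‖c i‖ * ‖c j‖) + if i = j then (1 - δ) * ‖c i‖ ^ 2 else 0) := by
        refine Finset.sum_congr rfl fun i _ => Finset.sum_congr rfl fun j _ => ?_
        split_ifs with h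
        · rw [h]; ring
        · ring
    _ = δ * ∑ i, ∑ j, ‖c i‖ * ‖c j‖ + (1 - δ) * ∑ i, ‖c i‖ ^ 2 := by
        simp only [Finset.sum_add_distrib, Finset.sum_ite_eq, Finset.mem_univ, if_true,
          Finset.mul_sum]
    _ ≤ (1 + (Fintype.card ι - 1) * δ) * ∑ i, ‖c i‖ ^ 2 := by
        rw [← Finset.sum_mul_sum, ← sq]
        nlinarith

theorem sum_norm_inner_sq_le_of_norm_inner_le [Nonempty ι] (hz : ∀ i, ‖z i‖ = 1) (hδ : 0 ≤ δ)
    (horth : ∀ i j, i ≠ j → ‖⟪z i, z j⟫_𝕜‖ ≤ δ) (v : E) :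
    ∑ i, ‖⟪z i, v⟫_𝕜‖ ^ 2 ≤ (1 + (Fintype.card ι - 1) * δ) * ‖v‖ ^ 2 := by
  set S := ∑ i, ‖⟪z i, v⟫_𝕜‖ ^ 2
  set w := ∑ i, ⟪z i, v⟫_𝕜 • z i
  have hB : 0 ≤ 1 + ((Fintype.card ι : ℝ) - 1) * δ := by
    have : (1 : ℝ) ≤ Fintype.card ι := by exact_mod_cast Fintype.card_pos
    nlinarith
  have hS : 0 ≤ S := by positivity
  have hSw : S ≤ ‖w‖ * ‖v‖ := by
    have : (S : 𝕜) = ⟪w, v⟫_𝕜 := by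
      simp only [S, w, sum_inner, inner_smul_left, RCLike.conj_mul]
      push_cast
      rfl
    calc S = ‖(S : 𝕜)‖ := by rw [RCLike.norm_ofReal, abs_of_nonneg hS]
      _ ≤ ‖w‖ * ‖v‖ := this ▸ norm_inner_le_norm w v
  have hw := norm_sum_smul_sq_le_of_norm_inner_le hz hδ horth (fun i => ⟪z i, v⟫_𝕜)
  have hS2 : S ^ 2 ≤ (1 + (Fintype.card ι - 1) * δ) * S * ‖v‖ ^ 2 := by
    calc S ^ 2 ≤ ‖w‖ ^ 2 * ‖v‖ ^ 2 := by rw [← mul_pow]; gcongr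
      _ ≤ _ := by gcongr
  by_contra! h
  have hpos : 0 < S := lt_of_le_of_lt (by positivity) h
  nlinarith [mul_lt_mul_of_pos_left h hpos]

end AlmostOrthogonal

namespace Matrix.IsHermitian

variable {𝕜 n : Type*} [RCLike 𝕜] [Fintype n] [DecidableEq n] {A : Matrix n n 𝕜}

theorem re_star_dotProduct_mulVec_le (hA : A.IsHermitian) {c : ℝ}
    (hc : ∀ j, hA.eigenvalues j ≤ c) (x : EuclideanSpace 𝕜 n) :
    RCLike.re (star ⇑x ⬝ᵥ (A *ᵥ ⇑x)) ≤ c * ‖x‖ ^ 2 := by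
  set u := hA.eigenvectorBasis
  set T := A.toEuclideanLin
  have hT : T.IsSymmetric := isSymmetric_toEuclideanLin_iff.mpr hA
  have hTu : ∀ j, T (u j) = (hA.eigenvalues j : 𝕜) • u j := fun j => by
    change WithLp.toLp 2 (A *ᵥ ⇑(u j)) = _
    rw [hA.mulVec_eigenvectorBasis, RCLike.real_smul_eq_coe_smul (K := 𝕜)]
    rfl
  have hquad : star ⇑x ⬝ᵥ (A *ᵥ ⇑x) = ∑ j, (hA.eigenvalues j : 𝕜) * ‖⟪u j, x⟫_𝕜‖ ^ 2 := by
    rw [dotProduct_comm]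
    change (T x).ofLp ⬝ᵥ star x.ofLp = _
    rw [← EuclideanSpace.inner_eq_star_dotProduct x (T x), ← u.sum_inner_mul_inner]
    refine Finset.sum_congr rfl fun j _ => ?_
    rw [← hT, hTu, inner_smul_left, RCLike.conj_ofReal, ← inner_conj_symm x, ← RCLike.conj_mul]
    ring
  calc RCLike.re (star ⇑x ⬝ᵥ (A *ᵥ ⇑x)) = ∑ j, hA.eigenvalues j * ‖⟪u j, x⟫_𝕜‖ ^ 2 := by
        rw [hquad]; simp
    _ ≤ ∑ j, c * ‖⟪u j, x⟫_𝕜‖ ^ 2 := by gcongr with j; exact hc j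
    _ = c * ‖x‖ ^ 2 := by rw [← Finset.mul_sum, u.sum_sq_norm_inner_right]

end Matrix.IsHermitian

section RankOneSum

variable {𝕜 n ι : Type*} [RCLike 𝕜] [Fintype n] [Fintype ι]

theorem star_dotProduct_sum_vecMulVec_mulVec (a : ι → ℝ) (z : ι → n → 𝕜) (v : n → 𝕜) :
    star v ⬝ᵥ ((∑ l, a l • vecMulVec (z l) (star (z l))) *ᵥ v)
      = ((∑ l, a l * ‖star (z l) ⬝ᵥ v‖ ^ 2 : ℝ) : 𝕜) := by
  simp only [sum_mulVec, smul_mulVec, vecMulVec_mulVec, op_smul_eq_smul, dotProduct_sum,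
    dotProduct_smul, smul_eq_mul, RCLike.real_smul_eq_coe_mul]
  push_cast
  refine Finset.sum_congr rfl fun l _ => ?_
  rw [star_dotProduct, ← RCLike.conj_mul]
  simp [mul_comm]

end RankOneSum

theorem sum_mul_le_mul_add_mul_sub {ι : Type*} [Fintype ι] (a q : ι → ℝ) (i₀ : ι) {b B : ℝ}
    (hb : 0 ≤ b) (ha : ∀ i ≠ i₀, a i ≤ b) (hq : ∀ i, 0 ≤ q i) (hqB : ∑ i, q i ≤ B) :
    ∑ i, a i * q i ≤ a i₀ * q i₀ + b * (B - q i₀) := by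
  classical
  have hsplit : ∀ f : ι → ℝ, ∑ i, f i = f i₀ + ∑ i ∈ Finset.univ.erase i₀, f i := fun f =>
    (Finset.add_sum_erase _ f (Finset.mem_univ i₀)).symm
  have htail : ∑ i ∈ Finset.univ.erase i₀, a i * q i ≤ b * ∑ i ∈ Finset.univ.erase i₀, q i := by
    rw [Finset.mul_sum]
    exact Finset.sum_le_sum fun i hi =>
      mul_le_mul_of_nonneg_right (ha i (Finset.ne_of_mem_erase hi)) (hq i)
  rw [hsplit (fun i => a i * q i)]
  rw [hsplit q] at hqB
  nlinarith

lemma hInner_eq_inner {n : ℕ} (x y : Fin n → ℂ) :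
    hInner x y = ⟪(WithLp.toLp 2 x : EuclideanSpace ℂ (Fin n)), WithLp.toLp 2 y⟫_ℂ := by
  simp [hInner, EuclideanSpace.inner_toLp_toLp, dotProduct, mul_comm]

lemma hInner_eq_star_dotProduct {n : ℕ} (x y : Fin n → ℂ) : hInner x y = star x ⬝ᵥ y := rfl

lemma hNorm_eq_norm {n : ℕ} (x : Fin n → ℂ) :
    hNorm x = ‖(WithLp.toLp 2 x : EuclideanSpace ℂ (Fin n))‖ := by
  rw [EuclideanSpace.norm_eq]; rfl

lemma norm_hInner_le {n : ℕ} (x y : Fin n → ℂ) : ‖hInner x y‖ ≤ hNorm x * hNorm y := by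
  rw [hInner_eq_inner, hNorm_eq_norm, hNorm_eq_norm]
  exact norm_inner_le_norm _ _

lemma Matrix.IsHermitian.exists_hNorm_eq_one_mulVec_eq {n : ℕ} {M : Matrix (Fin n) (Fin n) ℂ}
    (hM : M.IsHermitian) (j : Fin n) :
    ∃ v : Fin n → ℂ, hNorm v = 1 ∧ M *ᵥ v = (hM.eigenvalues j : ℂ) • v :=
  ⟨hM.eigenvectorBasis j, (hNorm_eq_norm _).trans (hM.eigenvectorBasis.orthonormal.1 j),
    by rw [hM.mulVec_eigenvectorBasis, Complex.coe_smul]⟩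

section TopEigenvalue

variable {n : ℕ} {ι : Type*} [Fintype ι] {a : ι → ℝ} {z : ι → Fin n → ℂ}
  {M : Matrix (Fin n) (Fin n) ℂ}

lemma weight_le_of_forall_eigenvalues_le (hM : M.IsHermitian)
    (hMdef : M = ∑ l, a l • vecMulVec (z l) (star (z l))) (ha : ∀ l, 0 ≤ a l) {l₀ : ι}
    (hz : hNorm (z l₀) = 1) {e : ℝ} (he : ∀ j, hM.eigenvalues j ≤ e) : a l₀ ≤ e := by
  have hray := hM.re_star_dotProduct_mulVec_le he (WithLp.toLp 2 (z l₀))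
  rw [← hNorm_eq_norm, hz, one_pow, mul_one] at hray
  change RCLike.re (star (z l₀) ⬝ᵥ (M *ᵥ z l₀)) ≤ e at hray
  rw [hMdef, star_dotProduct_sum_vecMulVec_mulVec, RCLike.ofReal_re] at hray
  have hself : ‖star (z l₀) ⬝ᵥ z l₀‖ = 1 := by
    rw [← hInner_eq_star_dotProduct, hInner_eq_inner, inner_self_eq_norm_sq_to_K,
      ← hNorm_eq_norm, hz]
    simp
  calc a l₀ = a l₀ * ‖star (z l₀) ⬝ᵥ z l₀‖ ^ 2 := by rw [hself]; ring
    _ ≤ ∑ l, a l * ‖star (z l) ⬝ᵥ z l₀‖ ^ 2 :=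
        Finset.single_le_sum (f := fun l => a l * ‖star (z l) ⬝ᵥ z l₀‖ ^ 2)
          (fun l _ => mul_nonneg (ha l) (sq_nonneg _)) (Finset.mem_univ l₀)
    _ ≤ e := hray

lemma eigenvalue_le_of_mulVec_eq [Nonempty ι]
    (hMdef : M = ∑ l, a l • vecMulVec (z l) (star (z l)))
    (hz : ∀ l, hNorm (z l) = 1) {δ : ℝ} (hδ : 0 ≤ δ) (horth : DeltaOrth z δ) (l₀ : ι) {b : ℝ}
    (hb : 0 ≤ b) (hab : ∀ l ≠ l₀, a l ≤ b) {v : Fin n → ℂ} (hv : hNorm v = 1) {e : ℝ}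
    (hMv : M *ᵥ v = (e : ℂ) • v) :
    e ≤ a l₀ * ‖hInner (z l₀) v‖ ^ 2
      + b * (1 + (Fintype.card ι - 1) * δ - ‖hInner (z l₀) v‖ ^ 2) := by
  have hquad : e = ∑ l, a l * ‖hInner (z l) v‖ ^ 2 := by
    have h := star_dotProduct_sum_vecMulVec_mulVec a z v
    rw [← hMdef, hMv, dotProduct_smul, ← hInner_eq_star_dotProduct, hInner_eq_inner,
      inner_self_eq_norm_sq_to_K, ← hNorm_eq_norm, hv] at h
    exact Complex.ofReal_injective (by simpa [hInner_eq_star_dotProduct] using h)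
  have hbessel : ∑ l, ‖hInner (z l) v‖ ^ 2 ≤ 1 + (Fintype.card ι - 1) * δ := by
    have h := sum_norm_inner_sq_le_of_norm_inner_le (𝕜 := ℂ) (z := fun l => WithLp.toLp 2 (z l))
      (fun l => (hNorm_eq_norm _).symm.trans (hz l)) hδ
      (fun i j hij => by simpa [← hInner_eq_inner, hz] using horth i j hij) (WithLp.toLp 2 v)
    simpa [← hInner_eq_inner, ← hNorm_eq_norm, hv] using h
  rw [hquad]
  exact sum_mul_le_mul_add_mul_sub a _ l₀ hb hab (fun l => sq_nonneg _) hbessel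

lemma top_eigenvalue_bounds [Nonempty ι] (hM : M.IsHermitian)
    (hMdef : M = ∑ l, a l • vecMulVec (z l) (star (z l))) (ha : ∀ l, 0 ≤ a l)
    (hz : ∀ l, hNorm (z l) = 1) {δ : ℝ} (hδ : 0 ≤ δ) (horth : DeltaOrth z δ) {l₀ l₁ : ι}
    (hab : ∀ l ≠ l₀, a l ≤ a l₁) (ha₁₀ : a l₁ ≤ a l₀) {j₀ : Fin n}
    (htop : ∀ j, hM.eigenvalues j ≤ hM.eigenvalues j₀) :
    (a l₀ ≤ hM.eigenvalues j₀ ∧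
      hM.eigenvalues j₀ ≤ a l₀ + a l₁ * ((Fintype.card ι - 1) * δ)) ∧
    ∀ v, hNorm v = 1 → M *ᵥ v = (hM.eigenvalues j₀ : ℂ) • v →
      (a l₀ - a l₁) * (1 - ‖hInner (z l₀) v‖ ^ 2) ≤ a l₁ * ((Fintype.card ι - 1) * δ) := by
  have hlow := weight_le_of_forall_eigenvalues_le hM hMdef ha (hz l₀) htop
  have hup {v} (hv : hNorm v = 1) (hMv : M *ᵥ v = (hM.eigenvalues j₀ : ℂ) • v) :=
    eigenvalue_le_of_mulVec_eq hMdef hz hδ horth l₀ (ha l₁) hab hv hMv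
  refine ⟨⟨hlow, ?_⟩, fun v hv hMv => by linarith [hup hv hMv]⟩
  obtain ⟨v, hv, hMv⟩ := hM.exists_hNorm_eq_one_mulVec_eq j₀
  have hq : ‖hInner (z l₀) v‖ ^ 2 ≤ 1 := by
    have h := norm_hInner_le (z l₀) v
    rw [hz, hv, one_mul] at h
    exact pow_le_one₀ (norm_nonneg _) h
  nlinarith [hup hv hMv, mul_nonneg (sub_nonneg.2 ha₁₀) (sub_nonneg.2 hq)]

end TopEigenvalue

/-- for `M = ∑ₗ npₗλ zₗzₗ^*` with `p₁ > p₂ ≥ … ≥ p_k > 0` and `z₁,…,z_k`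
unit and `δ`-orthogonal, the largest eigenvalue `λ̃₁` satisfies
`np₁λ ≤ λ̃₁ ≤ np₁λ + np₂λ(k−1)δ`, and any unit top eigenvector `ṽ₁` satisfies
`|⟨z₁,ṽ₁⟩|² ≥ 1 − p₂(k−1)δ/(p₁−p₂)`. -/
theorem stmt13 {n k : ℕ} (hk : 2 ≤ k) (hkn : k ≤ n)
    (lam : ℝ) (hlam : 0 < lam)
    (p : Fin k → ℝ) (hpk : 0 < p ⟨k - 1, by omega⟩)
    (hp12 : p ⟨1, by omega⟩ < p ⟨0, by omega⟩)
    (hpmono : ∀ l l' : Fin k, l ≤ l' → p l' ≤ p l)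
    (δ : ℝ) (hδ : δ ∈ Set.Icc (0:ℝ) 1)
    (z : Fin k → (Fin n → ℂ)) (hz : ∀ l, hNorm (z l) = 1)
    (horth : DeltaOrth z δ)
    (M : Matrix (Fin n) (Fin n) ℂ)
    (hMdef : M = Matrix.of fun i j =>
      ∑ l : Fin k, ((n : ℂ) * (p l : ℂ) * (lam : ℂ)) * z l i * (starRingEnd ℂ) (z l j))
    (hM : M.IsHermitian)
    (ev : Fin n → ℝ) (hanti : Antitone ev)
    (hperm : ∃ σ : Equiv.Perm (Fin n), ∀ i, ev i = hM.eigenvalues (σ i)) :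
    ((n : ℝ) * p ⟨0, by omega⟩ * lam ≤ ev ⟨0, by omega⟩ ∧
      ev ⟨0, by omega⟩ ≤ (n : ℝ) * p ⟨0, by omega⟩ * lam
        + (n : ℝ) * p ⟨1, by omega⟩ * lam * ((k : ℝ) - 1) * δ) ∧
    ∀ vt1 : Fin n → ℂ, hNorm vt1 = 1 →
      (∀ i, M.mulVec vt1 i = (ev ⟨0, by omega⟩ : ℂ) * vt1 i) →
      1 - p ⟨1, by omega⟩ * ((k : ℝ) - 1) * δ / (p ⟨0, by omega⟩ - p ⟨1, by omega⟩)
        ≤ ‖hInner (z ⟨0, by omega⟩) vt1‖ ^ 2 := by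
  set i₀ : Fin k := ⟨0, by omega⟩
  set i₁ : Fin k := ⟨1, by omega⟩
  have hnlam : 0 < (n : ℝ) * lam := mul_pos (by exact_mod_cast (show 0 < n by omega)) hlam
  set a : Fin k → ℝ := fun l => n * lam * p l
  have hMa : M = ∑ l, a l • vecMulVec (z l) (star (z l)) := by
    ext i j
    simp only [hMdef, a, of_apply, Matrix.sum_apply, Matrix.smul_apply, vecMulVec_apply,
      Pi.star_apply, Complex.real_smul, RCLike.star_def]
    push_cast
    exact Finset.sum_congr rfl fun l _ => by ring
  have ha : ∀ l, 0 ≤ a l := fun l =>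
    mul_nonneg hnlam.le (hpk.trans_le (hpmono l _ (Fin.le_def.2 (Nat.le_sub_one_of_lt l.2)))).le
  have hab : ∀ l ≠ i₀, a l ≤ a i₁ := fun l hl => mul_le_mul_of_nonneg_left
    (hpmono _ _ (Fin.le_def.2 (Nat.one_le_iff_ne_zero.2 fun h => hl (Fin.ext h)))) hnlam.le
  have : Nonempty (Fin k) := ⟨i₀⟩
  obtain ⟨σ, hσ⟩ := hperm
  have htop : ∀ j, hM.eigenvalues j ≤ hM.eigenvalues (σ ⟨0, by omega⟩) := fun j => by
    have h := hanti (show (⟨0, by omega⟩ : Fin n) ≤ σ.symm j from Fin.le_def.2 (Nat.zero_le _))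
    rwa [hσ, hσ, σ.apply_symm_apply] at h
  rw [hσ]
  obtain ⟨⟨hlow, hup⟩, hvec⟩ := top_eigenvalue_bounds (j₀ := σ ⟨0, by omega⟩) hM hMa ha hz
    hδ.1 horth hab (mul_le_mul_of_nonneg_left hp12.le hnlam.le) htop
  refine ⟨⟨by simpa [a, mul_right_comm] using hlow, by simp [a] at hup; linarith⟩,
    fun w hw hMw => ?_⟩
  have h := hvec w hw (funext hMw)
  simp only [a, Fintype.card_fin] at h
  rw [sub_le_comm, le_div_iff₀ (sub_pos.2 hp12)]
  exact le_of_mul_le_mul_left (by linarith) hnlam
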